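/- Multi-copy distinguishability, upper bound (paper's Lemma 2.1, right inequality, with the hypothesis needed for its validity): Let ρ₀, ρ₁ be density matrices on ℂ^d with ‖ρ₀ − ρ₁‖₁ ≤ 1, and let n ≥ 1 be a natural number. Then (1/2)·‖ρ₀^{⊗n} − ρ₁^{⊗n}‖₁ ≤ √(1 − (1 − ‖ρ₀ − ρ₁‖₁)^n). -/

import Mathlib

open Matrix BigOperators
open scoped ComplexOrder

open Classical in
noncomputable def msqrt {n : Type*} [Fintype n] [DecidableEq n] (A : Matrix n n ℂ) :
    Matrix n n ℂ :=
  if h : A.PosSemidef then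
    h.1.eigenvectorUnitary.1 * diagonal ((↑) ∘ (√·) ∘ h.1.eigenvalues) *
      (star h.1.eigenvectorUnitary : Matrix n n ℂ)
  else 0

noncomputable def traceNorm {n : Type*} [Fintype n] [DecidableEq n] (A : Matrix n n ℂ) : ℝ :=
  (msqrt (Aᴴ * A)).trace.re

noncomputable def fidelity {n : Type*} [Fintype n] [DecidableEq n] (ρ₀ ρ₁ : Matrix n n ℂ) : ℝ :=
  ((msqrt (msqrt ρ₀ * ρ₁ * msqrt ρ₀)).trace.re) ^ 2

noncomputable def tensorPow {d : ℕ} (ρ : Matrix (Fin d) (Fin d) ℂ) (n : ℕ) :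
    Matrix (Fin n → Fin d) (Fin n → Fin d) ℂ :=
  Matrix.of fun i j => ∏ k, ρ (i k) (j k)

/-!
Write `g(ρ, σ) = Re Tr(√ρ √σ)` for the affinity of two density matrices.
The Powers–Størmer inequality `Tr((A - B)²) ≤ ‖A² - B²‖₁` for `A, B ≥ 0`, applied to `√ρ, √σ`,
gives `1 - ‖ρ - σ‖₁ / 2 ≤ g`, hence `1 - ‖ρ - σ‖₁ ≤ g²` when `‖ρ - σ‖₁ ≤ 1`. Measuring with the
projection `P` onto the positive part of `ρ - σ` and applying Cauchy–Schwarz to the two blocks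
`√ρ P √σ` and `√ρ (1 - P) √σ` gives `(‖ρ - σ‖₁ / 2)² + g² ≤ 1`. Since `√(ρ^{⊗n}) = (√ρ)^{⊗n}`,
the affinity of the tensor powers is `gⁿ`, so the last bound applied to them yields
`(‖ρ^{⊗n} - σ^{⊗n}‖₁ / 2)² ≤ 1 - g^{2n} ≤ 1 - (1 - ‖ρ - σ‖₁)ⁿ`.
-/

open scoped MatrixOrder

variable {m : Type*} [Fintype m] [DecidableEq m]

lemma msqrt_eq_sqrt {A : Matrix m m ℂ} (hA : 0 ≤ A) : msqrt A = CFC.sqrt A := by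
  have hA' := nonneg_iff_posSemidef.mp hA
  rw [msqrt, dif_pos hA']
  change hA'.1.cfc Real.sqrt = _
  rw [CFC.sqrt_eq_cfc, cfc_nnreal_eq_real _ A hA, hA'.1.cfc_eq]
  congr 1 with x
  rw [Real.sqrt]

lemma traceNorm_eq_re_trace_abs (A : Matrix m m ℂ) : traceNorm A = (CFC.abs A).trace.re := by
  rw [traceNorm, ← star_eq_conjTranspose, msqrt_eq_sqrt (star_mul_self_nonneg A)]
  rfl

lemma traceNorm_eq_re_trace_posPart_add_negPart {A : Matrix m m ℂ} (hA : IsSelfAdjoint A) :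
    traceNorm A = A⁺.trace.re + A⁻.trace.re := by
  rw [traceNorm_eq_re_trace_abs, ← CFC.posPart_add_negPart A, trace_add, Complex.add_re]

lemma trace_mul_nonneg {A B : Matrix m m ℂ} (hA : 0 ≤ A) (hB : 0 ≤ B) : 0 ≤ (A * B).trace := by
  have hconj := star_left_conjugate_nonneg hA (CFC.sqrt B)
  rw [(CFC.sqrt_nonneg B).isSelfAdjoint.star_eq] at hconj
  rw [← CFC.sqrt_mul_sqrt_self B, ← mul_assoc, trace_mul_comm, ← mul_assoc]
  exact (nonneg_iff_posSemidef.mp hconj).trace_nonneg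

lemma re_trace_mul_nonneg {A B : Matrix m m ℂ} (hA : 0 ≤ A) (hB : 0 ≤ B) :
    0 ≤ (A * B).trace.re :=
  (Complex.nonneg_iff.mp (trace_mul_nonneg hA hB)).1

lemma re_trace_mul_le_traceNorm {W A : Matrix m m ℂ} (hW₁ : -1 ≤ W) (hW₂ : W ≤ 1)
    (hA : IsSelfAdjoint A) : (W * A).trace.re ≤ traceNorm A := by
  have hpos := re_trace_mul_nonneg (sub_nonneg.mpr hW₂) (CFC.posPart_nonneg A)
  have hneg := re_trace_mul_nonneg (sub_nonneg.mpr hW₁) (CFC.negPart_nonneg A)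
  rw [sub_mul, one_mul, trace_sub, Complex.sub_re] at hpos
  rw [sub_neg_eq_add, add_mul, one_mul, trace_add, Complex.add_re] at hneg
  rw [traceNorm_eq_re_trace_posPart_add_negPart hA]
  nth_rw 1 [← CFC.posPart_sub_negPart A]
  rw [mul_sub, trace_sub, Complex.sub_re]
  linarith

lemma exists_isStarProjection_mul_eq_posPart {A : Matrix m m ℂ} (hA : IsSelfAdjoint A) :
    ∃ P : Matrix m m ℂ, IsStarProjection P ∧ P * A = A⁺ ∧ A * P = A⁺ := by
  have hcont (f : ℝ → ℝ) : ContinuousOn f (spectrum ℝ A) :=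
    (Matrix.finite_real_spectrum (A := A)).continuousOn f
  set χ : ℝ → ℝ := fun x => if 0 < x then 1 else 0
  have hposPart : A⁺ = cfc (fun x => χ x * x) A := by
    rw [CFC.posPart_def, cfcₙ_eq_cfc]
    refine cfc_congr fun x _ => ?_
    by_cases hx : 0 < x
    · simp [χ, hx, hx.le]
    · simp [χ, hx, not_lt.mp hx]
  refine ⟨cfc χ A, ⟨?_, cfc_predicate χ A⟩, ?_, ?_⟩
  · rw [IsIdempotentElem, ← cfc_mul χ χ A (hcont _) (hcont _)]
    exact cfc_congr fun x _ => by by_cases hx : 0 < x <;> simp [χ, hx]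
  · nth_rw 2 [← cfc_id' ℝ A]
    rw [← cfc_mul χ _ A (hcont _) (hcont _), hposPart]
  · nth_rw 1 [← cfc_id' ℝ A]
    rw [← cfc_mul _ χ A (hcont _) (hcont _), hposPart]
    exact cfc_congr fun x _ => mul_comm _ _

theorem re_trace_sub_sq_le_traceNorm_sq_sub {A B : Matrix m m ℂ} (hA : 0 ≤ A) (hB : 0 ≤ B) :
    ((A - B) ^ 2).trace.re ≤ traceNorm (A ^ 2 - B ^ 2) := by
  set D := A - B with hD_def
  have hD : IsSelfAdjoint D := hA.isSelfAdjoint.sub hB.isSelfAdjoint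
  obtain ⟨P, hP, hPD, hDP⟩ := exists_isStarProjection_mul_eq_posPart hD
  have hW₁ : -1 ≤ (2 : ℂ) • P - 1 := by
    rw [le_sub_iff_add_le, neg_add_cancel]
    exact smul_nonneg zero_le_two hP.nonneg
  have hW₂ : (2 : ℂ) • P - 1 ≤ 1 := by
    rw [sub_le_iff_le_add, ← two_smul ℂ]
    exact smul_le_smul_of_nonneg_left hP.le_one zero_le_two
  -- `2 • P - 1` is the sign of `D`; as `P D = D P = D⁺`, cyclicity of the trace gives `key`
  have key : (((2 : ℂ) • P - 1) * (A ^ 2 - B ^ 2)).trace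
      = (D ^ 2).trace + 2 * (D⁻ * A).trace + 2 * (D⁺ * B).trace := by
    have hexpand : (((2 : ℂ) • P - 1) * (A ^ 2 - B ^ 2)).trace
        = 2 * (P * (A * D)).trace + 2 * (P * (D * B)).trace - (A * D).trace - (D * B).trace := by
      rw [show A ^ 2 - B ^ 2 = A * D + D * B by rw [hD_def]; noncomm_ring, sub_mul,
        smul_mul_assoc, one_mul, mul_add, trace_sub, trace_smul, trace_add, trace_add, smul_eq_mul]
      ring
    have hPAD : (P * (A * D)).trace = (D⁺ * A).trace := by
      rw [← mul_assoc, trace_mul_comm, ← mul_assoc, hDP]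
    have hPDB : (P * (D * B)).trace = (D⁺ * B).trace := by rw [← mul_assoc, hPD]
    have hDD : (D ^ 2).trace = (D * A).trace - (D * B).trace := by
      rw [sq]; nth_rw 2 [hD_def]; rw [mul_sub, trace_sub]
    have hnegPart : (D⁻ * A).trace = (D⁺ * A).trace - (D * A).trace := by
      rw [← trace_sub, ← sub_mul, ← sub_sub_cancel D⁺ D⁻, CFC.posPart_sub_negPart D]
    linear_combination hexpand + 2 * hPAD + 2 * hPDB - hDD - 2 * hnegPart - trace_mul_comm A D
  have hle := re_trace_mul_le_traceNorm hW₁ hW₂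
    ((hA.isSelfAdjoint.pow 2).sub (hB.isSelfAdjoint.pow 2))
  rw [key] at hle
  simp only [Complex.add_re, Complex.mul_re, Complex.re_ofNat, Complex.im_ofNat, zero_mul,
    sub_zero] at hle
  linarith [re_trace_mul_nonneg (CFC.negPart_nonneg D) hA,
    re_trace_mul_nonneg (CFC.posPart_nonneg D) hB]

lemma re_trace_mul_conjTranspose_le (X Y : Matrix m m ℂ) :
    (Y * Xᴴ).trace.re ≤ √(X * Xᴴ).trace.re * √(Y * Yᴴ).trace.re := by
  let := (1 : Matrix m m ℂ).toMatrixSeminormedAddCommGroup PosSemidef.one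
  let := (1 : Matrix m m ℂ).toMatrixInnerProductSpace PosSemidef.one
  have hinner (Z W : Matrix m m ℂ) : inner ℂ Z W = (W * Zᴴ).trace := by
    have h : inner ℂ Z W = (W * 1 * Zᴴ).trace := rfl
    rwa [mul_one] at h
  have h := re_inner_le_norm (𝕜 := ℂ) X Y
  rwa [norm_eq_sqrt_re_inner (𝕜 := ℂ) X, norm_eq_sqrt_re_inner (𝕜 := ℂ) Y, hinner, hinner,
    hinner] at h

lemma re_trace_sqrt_mul_mul_sqrt_le {A B E : Matrix m m ℂ} (hA : 0 ≤ A) (hB : 0 ≤ B)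
    (hE : IsStarProjection E) :
    (CFC.sqrt A * E * CFC.sqrt B).trace.re ≤ √(E * A).trace.re * √(E * B).trace.re := by
  have hconj (C : Matrix m m ℂ) : (E * CFC.sqrt C)ᴴ = CFC.sqrt C * E := by
    rw [conjTranspose_mul, ← star_eq_conjTranspose, ← star_eq_conjTranspose,
      (CFC.sqrt_nonneg C).isSelfAdjoint.star_eq, hE.isSelfAdjoint.star_eq]
  have hsq {C : Matrix m m ℂ} (hC : 0 ≤ C) :
      (E * CFC.sqrt C * (E * CFC.sqrt C)ᴴ).trace = (E * C).trace := by
    rw [hconj, mul_assoc, ← mul_assoc (CFC.sqrt C), CFC.sqrt_mul_sqrt_self C hC, ← mul_assoc,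
      trace_mul_comm, ← mul_assoc, hE.isIdempotentElem.eq]
  have hcross : (E * CFC.sqrt B * (E * CFC.sqrt A)ᴴ).trace
      = (CFC.sqrt A * E * CFC.sqrt B).trace := by
    rw [hconj, ← mul_assoc, trace_mul_comm]
    simp only [← mul_assoc]
    rw [hE.isIdempotentElem.eq, trace_mul_cycle]
  simpa only [hsq hA, hsq hB, hcross] using
    re_trace_mul_conjTranspose_le (E * CFC.sqrt A) (E * CFC.sqrt B)

noncomputable def affinity (ρ σ : Matrix m m ℂ) : ℝ := (CFC.sqrt ρ * CFC.sqrt σ).trace.re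

lemma affinity_nonneg {ρ σ : Matrix m m ℂ} : 0 ≤ affinity ρ σ :=
  re_trace_mul_nonneg (CFC.sqrt_nonneg ρ) (CFC.sqrt_nonneg σ)

theorem one_sub_traceNorm_div_two_le_affinity {ρ σ : Matrix m m ℂ} (hρ : 0 ≤ ρ) (hσ : 0 ≤ σ)
    (hρt : ρ.trace = 1) (hσt : σ.trace = 1) :
    1 - traceNorm (ρ - σ) / 2 ≤ affinity ρ σ := by
  have h := re_trace_sub_sq_le_traceNorm_sq_sub (CFC.sqrt_nonneg ρ) (CFC.sqrt_nonneg σ)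
  rw [CFC.sq_sqrt ρ hρ, CFC.sq_sqrt σ hσ] at h
  have hexpand : ((CFC.sqrt ρ - CFC.sqrt σ) ^ 2).trace.re = 2 - 2 * affinity ρ σ := by
    rw [show (CFC.sqrt ρ - CFC.sqrt σ) ^ 2 = CFC.sqrt ρ ^ 2 + CFC.sqrt σ ^ 2
        - CFC.sqrt ρ * CFC.sqrt σ - CFC.sqrt σ * CFC.sqrt ρ by noncomm_ring,
      CFC.sq_sqrt ρ hρ, CFC.sq_sqrt σ hσ, trace_sub, trace_sub, trace_add, hρt, hσt,
      trace_mul_comm (CFC.sqrt σ), affinity]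
    simp only [Complex.sub_re, Complex.add_re, Complex.one_re]
    ring
  linarith

lemma one_sub_traceNorm_le_affinity_sq {ρ σ : Matrix m m ℂ} (hρ : 0 ≤ ρ) (hσ : 0 ≤ σ)
    (hρt : ρ.trace = 1) (hσt : σ.trace = 1) (hT : traceNorm (ρ - σ) ≤ 1) :
    1 - traceNorm (ρ - σ) ≤ affinity ρ σ ^ 2 := by
  have h := one_sub_traceNorm_div_two_le_affinity hρ hσ hρt hσt
  nlinarith [mul_le_mul h h (by linarith) affinity_nonneg, sq_nonneg (traceNorm (ρ - σ))]

lemma sq_sub_add_affinity_sq_le_one {ρ σ P : Matrix m m ℂ} (hρ : 0 ≤ ρ) (hσ : 0 ≤ σ)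
    (hρt : ρ.trace = 1) (hσt : σ.trace = 1) (hP : IsStarProjection P) :
    ((P * ρ).trace.re - (P * σ).trace.re) ^ 2 + affinity ρ σ ^ 2 ≤ 1 := by
  set p := (P * ρ).trace.re
  set q := (P * σ).trace.re
  have hcompl {τ : Matrix m m ℂ} (hτt : τ.trace = 1) :
      ((1 - P) * τ).trace.re = 1 - (P * τ).trace.re := by
    rw [sub_mul, one_mul, trace_sub, hτt, Complex.sub_re, Complex.one_re]
  have hp : 0 ≤ p := re_trace_mul_nonneg hP.nonneg hρ
  have hq : 0 ≤ q := re_trace_mul_nonneg hP.nonneg hσ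
  have hp' : 0 ≤ 1 - p := hcompl hρt ▸ re_trace_mul_nonneg hP.one_sub.nonneg hρ
  have hq' : 0 ≤ 1 - q := hcompl hσt ▸ re_trace_mul_nonneg hP.one_sub.nonneg hσ
  have hsplit : affinity ρ σ = (CFC.sqrt ρ * P * CFC.sqrt σ).trace.re
      + (CFC.sqrt ρ * (1 - P) * CFC.sqrt σ).trace.re := by
    rw [affinity, ← Complex.add_re, ← trace_add, ← add_mul, ← mul_add, add_sub_cancel, mul_one]
  have hbound : affinity ρ σ ≤ √p * √q + √(1 - p) * √(1 - q) := by
    have h₁ := re_trace_sqrt_mul_mul_sqrt_le hρ hσ hP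
    have h₂ := re_trace_sqrt_mul_mul_sqrt_le hρ hσ hP.one_sub
    rw [hcompl hρt, hcompl hσt] at h₂
    linarith
  have hcauchy (x y z w : ℝ) : (x * y + z * w) ^ 2 ≤ (x ^ 2 + w ^ 2) * (y ^ 2 + z ^ 2) := by
    nlinarith [sq_nonneg (x * z - y * w)]
  calc ((p - q) ^ 2 + affinity ρ σ ^ 2)
      ≤ (p - q) ^ 2 + (√p * √q + √(1 - p) * √(1 - q)) ^ 2 := by
        gcongr
        exact affinity_nonneg
    _ ≤ (p - q) ^ 2 + (p + (1 - q)) * (q + (1 - p)) := by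
        grw [hcauchy]
        rw [Real.sq_sqrt hp, Real.sq_sqrt hq, Real.sq_sqrt hp', Real.sq_sqrt hq']
    _ = 1 := by ring

theorem sq_traceNorm_div_two_add_affinity_sq_le_one {ρ σ : Matrix m m ℂ} (hρ : 0 ≤ ρ)
    (hσ : 0 ≤ σ) (hρt : ρ.trace = 1) (hσt : σ.trace = 1) :
    (traceNorm (ρ - σ) / 2) ^ 2 + affinity ρ σ ^ 2 ≤ 1 := by
  have hΔ : IsSelfAdjoint (ρ - σ) := hρ.isSelfAdjoint.sub hσ.isSelfAdjoint
  obtain ⟨P, hP, hPΔ, -⟩ := exists_isStarProjection_mul_eq_posPart hΔ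
  have hhalf : traceNorm (ρ - σ) / 2 = (P * ρ).trace.re - (P * σ).trace.re := by
    have htr : (ρ - σ)⁺.trace.re - (ρ - σ)⁻.trace.re = 0 := by
      rw [← Complex.sub_re, ← trace_sub, CFC.posPart_sub_negPart _ hΔ, trace_sub, hρt, hσt,
        sub_self, Complex.zero_re]
    rw [traceNorm_eq_re_trace_posPart_add_negPart hΔ, ← Complex.sub_re, ← trace_sub, ← mul_sub,
      hPΔ]
    linarith
  rw [hhalf]
  exact sq_sub_add_affinity_sq_le_one hρ hσ hρt hσt hP

section TensorPower

variable {d : ℕ}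

lemma tensorPow_mul (A B : Matrix (Fin d) (Fin d) ℂ) (n : ℕ) :
    tensorPow A n * tensorPow B n = tensorPow (A * B) n := by
  ext i j
  simp only [tensorPow, mul_apply, of_apply]
  rw [Finset.prod_univ_sum, Fintype.piFinset_univ]
  exact Finset.sum_congr rfl fun x _ => (Finset.prod_mul_distrib).symm

lemma tensorPow_star (A : Matrix (Fin d) (Fin d) ℂ) (n : ℕ) :
    star (tensorPow A n) = tensorPow (star A) n := by
  ext i j
  simp [tensorPow, star_apply]

lemma tensorPow_trace (A : Matrix (Fin d) (Fin d) ℂ) (n : ℕ) :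
    (tensorPow A n).trace = A.trace ^ n := by
  simp only [trace, diag_apply, tensorPow, of_apply]
  rw [← Fin.prod_const, Finset.prod_univ_sum, Fintype.piFinset_univ]

lemma tensorPow_nonneg {A : Matrix (Fin d) (Fin d) ℂ} (hA : 0 ≤ A) (n : ℕ) :
    0 ≤ tensorPow A n := by
  have h := star_mul_self_nonneg (tensorPow (CFC.sqrt A) n)
  rwa [tensorPow_star, (CFC.sqrt_nonneg A).isSelfAdjoint.star_eq, tensorPow_mul,
    CFC.sqrt_mul_sqrt_self A hA] at h

lemma sqrt_tensorPow {A : Matrix (Fin d) (Fin d) ℂ} (hA : 0 ≤ A) (n : ℕ) :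
    CFC.sqrt (tensorPow A n) = tensorPow (CFC.sqrt A) n := by
  conv_lhs => rw [← CFC.sqrt_mul_sqrt_self A hA, ← tensorPow_mul, ← sq]
  exact CFC.sqrt_sq _ (tensorPow_nonneg (CFC.sqrt_nonneg A) n)

lemma affinity_tensorPow {ρ σ : Matrix (Fin d) (Fin d) ℂ} (hρ : 0 ≤ ρ) (hσ : 0 ≤ σ) (n : ℕ) :
    affinity (tensorPow ρ n) (tensorPow σ n) = affinity ρ σ ^ n := by
  have hreal : (CFC.sqrt ρ * CFC.sqrt σ).trace = affinity ρ σ :=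
    Complex.eq_re_of_ofReal_le (r := 0)
      (by exact_mod_cast trace_mul_nonneg (CFC.sqrt_nonneg ρ) (CFC.sqrt_nonneg σ))
  rw [affinity, sqrt_tensorPow hρ, sqrt_tensorPow hσ, tensorPow_mul, tensorPow_trace, hreal,
    ← Complex.ofReal_pow, Complex.ofReal_re]

end TensorPower

theorem multi_copy_distinguishability_upper'_general {d : ℕ} (ρ₀ ρ₁ : Matrix (Fin d) (Fin d) ℂ)
    (hρ₀ : ρ₀.PosSemidef) (hρ₀t : ρ₀.trace = 1)
    (hρ₁ : ρ₁.PosSemidef) (hρ₁t : ρ₁.trace = 1)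
    (hd : traceNorm (ρ₀ - ρ₁) ≤ 1)
    (n : ℕ) :
    (1 / 2) * traceNorm (tensorPow ρ₀ n - tensorPow ρ₁ n) ≤
      Real.sqrt (1 - (1 - traceNorm (ρ₀ - ρ₁)) ^ n) := by
  rw [← nonneg_iff_posSemidef] at hρ₀ hρ₁
  have htensor := sq_traceNorm_div_two_add_affinity_sq_le_one (tensorPow_nonneg hρ₀ n)
    (tensorPow_nonneg hρ₁ n) (by rw [tensorPow_trace, hρ₀t, one_pow])
    (by rw [tensorPow_trace, hρ₁t, one_pow])
  rw [affinity_tensorPow hρ₀ hρ₁, ← pow_mul, mul_comm, pow_mul] at htensor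
  have hpow := pow_le_pow_left₀ (sub_nonneg.mpr hd)
    (one_sub_traceNorm_le_affinity_sq hρ₀ hρ₁ hρ₀t hρ₁t hd) n
  rw [one_div_mul_eq_div]
  exact Real.le_sqrt_of_sq_le (by linarith)

/-- Multi-copy distinguishability, upper bound (paper's form, with validity hypothesis). -/
theorem multi_copy_distinguishability_upper' {d : ℕ} (ρ₀ ρ₁ : Matrix (Fin d) (Fin d) ℂ)
    (hρ₀ : ρ₀.PosSemidef) (hρ₀t : ρ₀.trace = 1)
    (hρ₁ : ρ₁.PosSemidef) (hρ₁t : ρ₁.trace = 1)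
    (hd : traceNorm (ρ₀ - ρ₁) ≤ 1)
    (n : ℕ) (hn : 1 ≤ n) :
    (1 / 2) * traceNorm (tensorPow ρ₀ n - tensorPow ρ₁ n) ≤
      Real.sqrt (1 - (1 - traceNorm (ρ₀ - ρ₁)) ^ n) :=
  multi_copy_distinguishability_upper'_general ρ₀ ρ₁ hρ₀ hρ₀t hρ₁ hρ₁t hd n
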